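/- arXiv:2507.09916 — 2 statements merged into one kernel-verified Lean document; each statement's English description precedes it below -/
import Mathlib

section
/- Let $S$ be a discrete-time $\mathbb{R}^d$-valued adapted price process and define $\Pi_t^S := \sqrt{\mathbb{E}[\Delta S^t (\Delta S^t)^\top \mid \mathcal{F}_t]}$ (the positive semidefinite square root) for $t = 1, \dots, T-1$. Then for any two square-integrable adapted strategies $\vartheta, \bar\vartheta$, the gains processes coincide, i.e., $(\vartheta \cdot S)_t = (\bar\vartheta \cdot S)_t$ a.s. for all $t$, if and only if $\Pi_t^S \vartheta_t = \Pi_t^S \bar\vartheta_t$ a.s. for all $t = 1, \dots, T-1$. -/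
open MeasureTheory

/-- Discrete gains process `(ϑ ⬝ S)_n = ∑_{l<n} ϑ_lᵀ (S^{l+1} - S^l)`. -/
def gains {Ω : Type*} (d : ℕ) (S : ℕ → Ω → Fin d → ℝ)
    (ϑ : ℕ → Ω → Fin d → ℝ) (n : ℕ) (ω : Ω) : ℝ :=
  ∑ l ∈ Finset.range n, ∑ i, ϑ l ω i * (S (l + 1) ω i - S l ω i)

open MeasureTheory
open scoped ENNReal
open Matrix

lemma core (d : ℕ) {Ω : Type*} [m0 : MeasurableSpace Ω]
    (μ : Measure Ω) [IsProbabilityMeasure μ]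
    (m : MeasurableSpace Ω) (hm : m ≤ m0)
    (δ D : Ω → Fin d → ℝ)
    (hδ : StronglyMeasurable[m] δ)
    (hD2 : ∀ i, MemLp (fun ω => D ω i) 2 μ)
    (hX2 : Integrable (fun ω => (∑ i, δ ω i * D ω i) ^ 2) μ)
    (P : Ω → Matrix (Fin d) (Fin d) ℝ)
    (hP : ∀ᵐ ω ∂μ, (P ω).PosSemidef ∧
      P ω * P ω = Matrix.of (fun (i j : Fin d) =>
        condExp m μ (fun ω' => D ω' i * D ω' j) ω)) :
    ((fun ω => ∑ i, δ ω i * D ω i) =ᵐ[μ] 0) ↔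
      (∀ᵐ ω ∂μ, (P ω).mulVec (δ ω) = 0) := by
  haveI : SigmaFinite (μ.trim hm) := by infer_instance
  set X : Ω → ℝ := fun ω => ∑ i, δ ω i * D ω i with hXdef
  -- component measurability
  have hδi : ∀ i, StronglyMeasurable[m] (fun ω => δ ω i) :=
    fun i => (continuous_apply i).comp_stronglyMeasurable hδ
  -- products D_i D_j integrable
  have hDD : ∀ i j, Integrable (fun ω => D ω i * D ω j) μ := by
    intro i j
    have := ((hD2 i).smul (hD2 j) :
      MemLp (fun ω => D ω j • D ω i) 1 μ)
    rw [memLp_one_iff_integrable] at this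
    simpa [mul_comm, Pi.mul_def] using this
  -- conditional covariance
  set C : Fin d → Fin d → Ω → ℝ :=
    fun i j => condExp m μ (fun ω' => D ω' i * D ω' j) with hCdef
  set Q : Ω → ℝ := fun ω => ∑ i, ∑ j, δ ω i * δ ω j * C i j ω with hQdef
  -- truncation sets
  set A : ℕ → Set Ω := fun K => {ω | ∀ i, |δ ω i| ≤ (K : ℝ)} with hAdef
  have hAmeas : ∀ K, MeasurableSet[m] (A K) := by
    intro K
    have : A K = ⋂ i, {ω | |δ ω i| ≤ (K : ℝ)} := by
      ext ω; simp [hAdef, Set.mem_iInter]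
    rw [this]
    exact MeasurableSet.iInter fun i =>
      measurableSet_le ((hδi i).measurable.abs) measurable_const
  set ind : ℕ → Ω → ℝ := fun K => (A K).indicator (fun _ => (1 : ℝ)) with hinddef
  have hind_nonneg : ∀ K ω, 0 ≤ ind K ω := fun K ω =>
    Set.indicator_nonneg (fun _ _ => zero_le_one) ω
  have hind_le_one : ∀ K ω, ind K ω ≤ 1 := fun K ω =>
    Set.indicator_le_self' (fun _ _ => zero_le_one) ω
  have hind_sm : ∀ K, StronglyMeasurable[m] (ind K) := fun K =>
    (stronglyMeasurable_const.indicator (hAmeas K))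
  -- f K i j = ind K * δ i * δ j, bounded m-measurable
  set f : ℕ → Fin d → Fin d → Ω → ℝ :=
    fun K i j ω => ind K ω * (δ ω i * δ ω j) with hfdef
  have hf_sm : ∀ K i j, StronglyMeasurable[m] (f K i j) := fun K i j =>
    (hind_sm K).mul ((hδi i).mul (hδi j))
  have hf_bdd : ∀ K i j ω, ‖f K i j ω‖ ≤ (K : ℝ) ^ 2 := by
    intro K i j ω
    by_cases hω : ω ∈ A K
    · have hi := hω i; have hj := hω j
      simp only [hfdef, hinddef, Set.indicator_of_mem hω]
      rw [one_mul]
      calc ‖δ ω i * δ ω j‖ = |δ ω i| * |δ ω j| := abs_mul _ _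
        _ ≤ (K : ℝ) * (K : ℝ) := by
            exact mul_le_mul hi hj (abs_nonneg (δ ω j)) (Nat.cast_nonneg K)
        _ = (K : ℝ) ^ 2 := (sq (K : ℝ)).symm
    · have h0 : f K i j ω = 0 := by
        simp [hfdef, hinddef, Set.indicator_of_notMem hω]
      rw [h0, norm_zero]
      positivity
  have hfDD_int : ∀ K i j, Integrable (fun ω => f K i j ω * (D ω i * D ω j)) μ :=
    fun K i j => (hDD i j).bdd_mul ((hf_sm K i j).mono hm).aestronglyMeasurable
      (Filter.Eventually.of_forall (hf_bdd K i j))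
  have hfC_int : ∀ K i j, Integrable (fun ω => f K i j ω * C i j ω) μ :=
    fun K i j => (integrable_condExp).bdd_mul
      ((hf_sm K i j).mono hm).aestronglyMeasurable (Filter.Eventually.of_forall (hf_bdd K i j))
  -- pull-out: ∫ f * DD = ∫ f * C
  have hpull : ∀ K i j,
      ∫ ω, f K i j ω * (D ω i * D ω j) ∂μ = ∫ ω, f K i j ω * C i j ω ∂μ := by
    intro K i j
    have h1 : μ[(fun ω => f K i j ω * (D ω i * D ω j)) | m]
        =ᵐ[μ] fun ω => f K i j ω * C i j ω :=
      condExp_mul_of_stronglyMeasurable_left (hf_sm K i j) (hfDD_int K i j) (hDD i j)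
    calc ∫ ω, f K i j ω * (D ω i * D ω j) ∂μ
        = ∫ ω, (μ[(fun ω => f K i j ω * (D ω i * D ω j)) | m]) ω ∂μ :=
          (integral_condExp hm).symm
      _ = ∫ ω, f K i j ω * C i j ω ∂μ := integral_congr_ae h1
  -- pointwise expansion: ind K * X^2 = ∑ i ∑ j f K i j * (D i * D j)
  have hexp : ∀ K ω, ind K ω * X ω ^ 2
      = ∑ i, ∑ j, f K i j ω * (D ω i * D ω j) := by
    intro K ω
    have : X ω ^ 2 = ∑ i, ∑ j, (δ ω i * δ ω j) * (D ω i * D ω j) := by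
      rw [sq, hXdef, Finset.sum_mul_sum]
      exact Finset.sum_congr rfl fun i _ => Finset.sum_congr rfl fun j _ => by ring
    rw [this, Finset.mul_sum]
    exact Finset.sum_congr rfl fun i _ => by
      rw [Finset.mul_sum]
      exact Finset.sum_congr rfl fun j _ => by rw [hfdef]; ring
  -- key integral identity
  have hkey : ∀ K, ∫ ω, ind K ω * X ω ^ 2 ∂μ = ∫ ω, ind K ω * Q ω ∂μ := by
    intro K
    have hQexp : ∀ ω, ind K ω * Q ω = ∑ i, ∑ j, f K i j ω * C i j ω := by
      intro ω
      rw [hQdef, Finset.mul_sum]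
      exact Finset.sum_congr rfl fun i _ => by
        rw [Finset.mul_sum]
        exact Finset.sum_congr rfl fun j _ => by rw [hfdef]; ring
    calc ∫ ω, ind K ω * X ω ^ 2 ∂μ
        = ∫ ω, ∑ i, ∑ j, f K i j ω * (D ω i * D ω j) ∂μ :=
          integral_congr_ae (Filter.Eventually.of_forall (hexp K))
      _ = ∑ i, ∑ j, ∫ ω, f K i j ω * (D ω i * D ω j) ∂μ := by
          rw [integral_finset_sum _ fun i _ =>
            integrable_finset_sum _ fun j _ => hfDD_int K i j]
          exact Finset.sum_congr rfl fun i _ =>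
            integral_finset_sum _ fun j _ => hfDD_int K i j
      _ = ∑ i, ∑ j, ∫ ω, f K i j ω * C i j ω ∂μ :=
          Finset.sum_congr rfl fun i _ => Finset.sum_congr rfl fun j _ => hpull K i j
      _ = ∫ ω, ∑ i, ∑ j, f K i j ω * C i j ω ∂μ := by
          rw [integral_finset_sum _ fun i _ =>
            integrable_finset_sum _ fun j _ => hfC_int K i j]
          exact (Finset.sum_congr rfl fun i _ =>
            (integral_finset_sum _ fun j _ => hfC_int K i j).symm)
      _ = ∫ ω, ind K ω * Q ω ∂μ :=
          integral_congr_ae (Filter.Eventually.of_forall fun ω => (hQexp ω).symm)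
  -- a.e., Q ω = ∑ k, ((P ω).mulVec (δ ω) k)^2
  have hQP : ∀ᵐ ω ∂μ, Q ω = ∑ k, ((P ω).mulVec (δ ω) k) ^ 2 := by
    filter_upwards [hP] with ω hPω
    obtain ⟨hpsd, hsq⟩ := hPω
    have hsym : (P ω)ᵀ = P ω := hpsd.isHermitian.eq
    have h1 : Q ω = δ ω ⬝ᵥ (P ω * P ω).mulVec (δ ω) := by
      rw [hsq]
      simp only [hQdef, hCdef, dotProduct, Matrix.mulVec, Matrix.of_apply,
        Finset.mul_sum]
      exact Finset.sum_congr rfl fun i _ => Finset.sum_congr rfl fun j _ => by ring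
    rw [h1, ← Matrix.mulVec_mulVec, Matrix.dotProduct_mulVec, ← Matrix.mulVec_transpose,
      hsym]
    simp [dotProduct, sq]
  -- integrability of ind*X² and ind*Q
  have hindX2_int : ∀ K, Integrable (fun ω => ind K ω * X ω ^ 2) μ := by
    intro K
    refine hX2.bdd_mul ((hind_sm K).mono hm).aestronglyMeasurable (c := 1) (Filter.Eventually.of_forall fun ω => ?_)
    rw [Real.norm_eq_abs, abs_of_nonneg (hind_nonneg K ω)]
    exact hind_le_one K ω
  have hindQ_int : ∀ K, Integrable (fun ω => ind K ω * Q ω) μ := by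
    intro K
    have : (fun ω => ind K ω * Q ω) = fun ω => ∑ i, ∑ j, f K i j ω * C i j ω := by
      funext ω
      rw [hQdef, Finset.mul_sum]
      exact Finset.sum_congr rfl fun i _ => by
        rw [Finset.mul_sum]
        exact Finset.sum_congr rfl fun j _ => by rw [hfdef]; ring
    rw [this]
    exact integrable_finset_sum _ fun i _ =>
      integrable_finset_sum _ fun j _ => hfC_int K i j
  -- everyone is in some A K
  have hcover : ∀ ω, ∃ K : ℕ, ω ∈ A K := by
    intro ω
    obtain ⟨K, hK⟩ := exists_nat_ge (∑ i, |δ ω i|)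
    refine ⟨K, fun i => le_trans ?_ hK⟩
    exact Finset.single_le_sum (f := fun j => |δ ω j|) (fun j _ => abs_nonneg _) (Finset.mem_univ i)
  constructor
  · -- X = 0 a.e. → P δ = 0 a.e.
    intro hX0
    have hQ0 : ∀ K : ℕ, ∀ᵐ ω ∂μ, ind K ω * Q ω = 0 := by
      intro K
      have hint0 : ∫ ω, ind K ω * Q ω ∂μ = 0 := by
        rw [← hkey K]
        rw [integral_eq_zero_iff_of_nonneg_ae _ (hindX2_int K)]
        · filter_upwards [hX0] with ω hω
          have hX0' : X ω = 0 := by simpa using hω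
          simp [hX0']
        · exact Filter.Eventually.of_forall fun ω =>
            mul_nonneg (hind_nonneg K ω) (sq_nonneg _)
      have hnn : 0 ≤ᵐ[μ] fun ω => ind K ω * Q ω := by
        filter_upwards [hQP] with ω hω
        rw [hω]
        exact mul_nonneg (hind_nonneg K ω)
          (Finset.sum_nonneg fun k _ => sq_nonneg _)
      exact (integral_eq_zero_iff_of_nonneg_ae hnn (hindQ_int K)).mp hint0
    have hall : ∀ᵐ ω ∂μ, ∀ K : ℕ, ind K ω * Q ω = 0 := ae_all_iff.mpr hQ0
    filter_upwards [hall, hQP] with ω hω hQω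
    obtain ⟨K, hK⟩ := hcover ω
    have : Q ω = 0 := by
      have h3 := hω K
      have h4 : ind K ω = 1 := by simp [hinddef, Set.indicator_of_mem hK]
      rwa [h4, one_mul] at h3
    rw [hQω] at this
    funext k
    have hk : ((P ω).mulVec (δ ω) k) ^ 2 = 0 := by
      by_contra hne
      have hpos : 0 < ((P ω).mulVec (δ ω) k) ^ 2 :=
        lt_of_le_of_ne (sq_nonneg _) (Ne.symm hne)
      have hle : ((P ω).mulVec (δ ω) k) ^ 2 ≤ ∑ k', ((P ω).mulVec (δ ω) k') ^ 2 :=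
        Finset.single_le_sum (f := fun k' => ((P ω).mulVec (δ ω) k') ^ 2) (fun k' _ => sq_nonneg _) (Finset.mem_univ k)
      linarith [this ▸ hle]
    have h5 : (P ω).mulVec (δ ω) k = 0 := sq_eq_zero_iff.mp hk
    simpa using h5
  · -- P δ = 0 a.e. → X = 0 a.e.
    intro hP0
    have hQ0 : ∀ᵐ ω ∂μ, Q ω = 0 := by
      filter_upwards [hQP, hP0] with ω h1 h2
      rw [h1, h2]; simp
    have hX20 : ∀ K : ℕ, ∀ᵐ ω ∂μ, ind K ω * X ω ^ 2 = 0 := by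
      intro K
      have hint0 : ∫ ω, ind K ω * X ω ^ 2 ∂μ = 0 := by
        rw [hkey K]
        rw [integral_eq_zero_iff_of_nonneg_ae _ (hindQ_int K)]
        · filter_upwards [hQ0] with ω hω
          simp [hω]
        · filter_upwards [hQP] with ω hω
          rw [hω]
          exact mul_nonneg (hind_nonneg K ω)
            (Finset.sum_nonneg fun k _ => sq_nonneg _)
      exact (integral_eq_zero_iff_of_nonneg_ae
        (Filter.Eventually.of_forall fun ω =>
          mul_nonneg (hind_nonneg K ω) (sq_nonneg _)) (hindX2_int K)).mp hint0
    have hall : ∀ᵐ ω ∂μ, ∀ K : ℕ, ind K ω * X ω ^ 2 = 0 := ae_all_iff.mpr hX20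
    filter_upwards [hall] with ω hω
    obtain ⟨K, hK⟩ := hcover ω
    have h3 := hω K
    have h4 : ind K ω = 1 := by simp [hinddef, Set.indicator_of_mem hK]
    rw [h4, one_mul] at h3
    show X ω = 0
    exact sq_eq_zero_iff.mp h3

/-- two square-integrable adapted strategies produce the same
gains process iff `Π_t ϑ_t = Π_t ϑ̄_t` a.s. for every `t`, where `Π_t` is the
positive semidefinite square root of the conditional covariance
`E[ΔS^t (ΔS^t)ᵀ | 𝓕_t]`. -/
theorem stmt_8 (d T : ℕ) (hT : 1 ≤ T) {Ω : Type*} [m0 : MeasurableSpace Ω]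
    (μ : Measure Ω) [IsProbabilityMeasure μ]
    (ℱ : Filtration ℕ m0)
    (S : ℕ → Ω → Fin d → ℝ)
    (hSadapted : ∀ t, StronglyMeasurable[ℱ t] (S t))
    (hSint : ∀ t i j, Integrable (fun ω => S t ω i * S t ω j) μ)
    -- Π_t, the positive semidefinite square root of E[ΔS^t (ΔS^t)ᵀ | 𝓕_t]:
    (Pmat : ℕ → Ω → Matrix (Fin d) (Fin d) ℝ)
    (hPmat : ∀ t, ∀ᵐ ω ∂μ, (Pmat t ω).PosSemidef ∧
      Pmat t ω * Pmat t ω = Matrix.of (fun (i j : Fin d) =>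
        condExp (ℱ t) μ
          (fun ω' => (S (t + 1) ω' i - S t ω' i) * (S (t + 1) ω' j - S t ω' j)) ω))
    -- two adapted strategies in L²(S):
    (ϑ ϑ' : ℕ → Ω → Fin d → ℝ)
    (hϑad : ∀ t, StronglyMeasurable[ℱ t] (ϑ t))
    (hϑ'ad : ∀ t, StronglyMeasurable[ℱ t] (ϑ' t))
    (hϑL2 : ∀ t, Integrable
      (fun ω => (∑ i, ϑ t ω i * (S (t + 1) ω i - S t ω i)) ^ 2) μ)
    (hϑ'L2 : ∀ t, Integrable
      (fun ω => (∑ i, ϑ' t ω i * (S (t + 1) ω i - S t ω i)) ^ 2) μ) :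
    (∀ n, n ≤ T - 1 → gains d S ϑ n =ᵐ[μ] gains d S ϑ' n)
    ↔ (∀ t, t < T - 1 →
        ∀ᵐ ω ∂μ, (Pmat t ω).mulVec (ϑ t ω) = (Pmat t ω).mulVec (ϑ' t ω)) := by
  -- component measurability of S
  have hSi : ∀ t i, AEStronglyMeasurable (fun ω => S t ω i) μ := fun t i =>
    (((continuous_apply i).comp_stronglyMeasurable
      ((hSadapted t).mono (ℱ.le t)))).aestronglyMeasurable
  -- each S t · i is in L²
  have hS2 : ∀ t i, MemLp (fun ω => S t ω i) 2 μ := fun t i =>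
    (memLp_two_iff_integrable_sq (hSi t i)).mpr
      (by simpa [pow_two] using hSint t i i)
  have hD2 : ∀ t i, MemLp (fun ω => S (t + 1) ω i - S t ω i) 2 μ := fun t i =>
    (hS2 (t + 1) i).sub (hS2 t i)
  -- measurability of the one-step gains
  have hXsm : ∀ (φ : ℕ → Ω → Fin d → ℝ), (∀ t, StronglyMeasurable[ℱ t] (φ t)) → ∀ t,
      AEStronglyMeasurable
        (fun ω => ∑ i, φ t ω i * (S (t + 1) ω i - S t ω i)) μ := by
    intro φ hφ t
    refine (Finset.stronglyMeasurable_fun_sum _ fun i _ => ?_).aestronglyMeasurable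
    exact ((continuous_apply i).comp_stronglyMeasurable ((hφ t).mono (ℱ.le t))).mul
      (((continuous_apply i).comp_stronglyMeasurable
          ((hSadapted (t + 1)).mono (ℱ.le (t + 1)))).sub
        ((continuous_apply i).comp_stronglyMeasurable ((hSadapted t).mono (ℱ.le t))))
  have hXL2 : ∀ t, MemLp
      (fun ω => ∑ i, ϑ t ω i * (S (t + 1) ω i - S t ω i)) 2 μ := fun t =>
    (memLp_two_iff_integrable_sq (hXsm ϑ hϑad t)).mpr (hϑL2 t)
  have hX'L2 : ∀ t, MemLp
      (fun ω => ∑ i, ϑ' t ω i * (S (t + 1) ω i - S t ω i)) 2 μ := fun t =>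
    (memLp_two_iff_integrable_sq (hXsm ϑ' hϑ'ad t)).mpr (hϑ'L2 t)
  have hfun : ∀ t, (fun ω => ∑ i, (ϑ t ω i - ϑ' t ω i) * (S (t + 1) ω i - S t ω i))
      = (fun ω => (∑ i, ϑ t ω i * (S (t + 1) ω i - S t ω i))
          - ∑ i, ϑ' t ω i * (S (t + 1) ω i - S t ω i)) := by
    intro t; funext ω
    rw [← Finset.sum_sub_distrib]
    exact Finset.sum_congr rfl fun i _ => by ring
  have hX2 : ∀ t, Integrable
      (fun ω => (∑ i, (ϑ t ω i - ϑ' t ω i) * (S (t + 1) ω i - S t ω i)) ^ 2) μ := by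
    intro t
    have hmem : MemLp (fun ω => (∑ i, ϑ t ω i * (S (t + 1) ω i - S t ω i))
        - ∑ i, ϑ' t ω i * (S (t + 1) ω i - S t ω i)) 2 μ := (hXL2 t).sub (hX'L2 t)
    have h6 := (memLp_two_iff_integrable_sq hmem.aestronglyMeasurable).mp hmem
    exact h6.congr (Filter.Eventually.of_forall fun ω =>
      congrArg (fun x => x ^ 2) (congrFun (hfun t) ω).symm)
  -- core equivalence per time t
  have hcore : ∀ t,
      ((fun ω => ∑ i, (ϑ t ω i - ϑ' t ω i) * (S (t + 1) ω i - S t ω i)) =ᵐ[μ] 0)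
      ↔ (∀ᵐ ω ∂μ, (Pmat t ω).mulVec (ϑ t ω - ϑ' t ω) = 0) := by
    intro t
    exact core d μ (ℱ t) (ℱ.le t) (fun ω => ϑ t ω - ϑ' t ω)
      (fun ω i => S (t + 1) ω i - S t ω i)
      ((hϑad t).sub (hϑ'ad t)) (hD2 t) (hX2 t) (Pmat t) (hPmat t)
  constructor
  · -- gains equal → Π ϑ = Π ϑ'
    intro hg t ht
    have h1 : t ≤ T - 1 := le_of_lt ht
    have h2 : t + 1 ≤ T - 1 := ht
    have key : ∀ ω, ∑ i, (ϑ t ω i - ϑ' t ω i) * (S (t + 1) ω i - S t ω i)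
        = (gains d S ϑ (t + 1) ω - gains d S ϑ t ω)
          - (gains d S ϑ' (t + 1) ω - gains d S ϑ' t ω) := by
      intro ω
      rw [congrFun (hfun t) ω]
      simp only [gains, Finset.sum_range_succ]
      ring
    have hX0 : (fun ω => ∑ i, (ϑ t ω i - ϑ' t ω i) * (S (t + 1) ω i - S t ω i))
        =ᵐ[μ] 0 := by
      filter_upwards [hg t h1, hg (t + 1) h2] with ω k1 k2
      have k1' : gains d S ϑ t ω = gains d S ϑ' t ω := k1
      have k2' : gains d S ϑ (t + 1) ω = gains d S ϑ' (t + 1) ω := k2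
      show ∑ i, (ϑ t ω i - ϑ' t ω i) * (S (t + 1) ω i - S t ω i) = 0
      rw [key ω, k1', k2']; ring
    filter_upwards [(hcore t).mp hX0] with ω hω
    have h7 : (Pmat t ω).mulVec (ϑ t ω) - (Pmat t ω).mulVec (ϑ' t ω) = 0 := by
      rw [← Matrix.mulVec_sub]; exact hω
    exact sub_eq_zero.mp h7
  · -- Π ϑ = Π ϑ' → gains equal
    intro h n hn
    have hall : ∀ᵐ ω ∂μ, ∀ l, l < n →
        ∑ i, (ϑ l ω i - ϑ' l ω i) * (S (l + 1) ω i - S l ω i) = 0 := by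
      rw [ae_all_iff]
      intro l
      by_cases hl : l < n
      · have hlt : l < T - 1 := lt_of_lt_of_le hl hn
        have hmv : ∀ᵐ ω ∂μ, (Pmat l ω).mulVec (ϑ l ω - ϑ' l ω) = 0 := by
          filter_upwards [h l hlt] with ω hω
          rw [Matrix.mulVec_sub, hω, sub_self]
        filter_upwards [(hcore l).mpr hmv] with ω hω _
        simpa using hω
      · exact Filter.Eventually.of_forall fun ω hl' => absurd hl' hl
    filter_upwards [hall] with ω hω
    show gains d S ϑ n ω = gains d S ϑ' n ω
    have hdiff : gains d S ϑ n ω - gains d S ϑ' n ω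
        = ∑ l ∈ Finset.range n,
            ∑ i, (ϑ l ω i - ϑ' l ω i) * (S (l + 1) ω i - S l ω i) := by
      simp only [gains, ← Finset.sum_sub_distrib]
      exact Finset.sum_congr rfl fun l _ => Finset.sum_congr rfl fun i _ => by ring
    have hzero : ∑ l ∈ Finset.range n,
        ∑ i, (ϑ l ω i - ϑ' l ω i) * (S (l + 1) ω i - S l ω i) = 0 :=
      Finset.sum_eq_zero fun l hl => hω l (Finset.mem_range.mp hl)
    have := hdiff.trans hzero
    linarith
end

section
/- Recursive bound propagation for adapted Wasserstein error: let $T \ge 1$, $\mathcal{T} > 1$, $\epsilon_{score} < 1$, and $\alpha(\mathcal{T}) := \mathcal{T}^2 e^{-\mathcal{T}} + e^{-c\mathcal{T}} < 1$. Suppose a nonnegative sequence $(a_t)_{t=1}^T$ satisfies $a_1 \le C(\mathcal{T}^{5/2}\epsilon_{score} + \alpha(\mathcal{T}))$ and $a_{t+1} \le C\left( a_t + \mathcal{T}^{5/2}\epsilon_{score} + \mathcal{T}^{5/2} a_t^{1/2} + \alpha(\mathcal{T}) \right)$ for $t = 1, \dots, T-1$. Then $a_T \le C'\left( \mathcal{T}^{5T/2}\,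 \epsilon_{score}^{1/2^{T-1}} + \mathcal{T}^{5(T-1)/2}\, \alpha(\mathcal{T})^{1/2^{T-1}} \right)$ for a constant $C'$ depending only on $C$ and $T$. -/
/-!
With `s = 𝒯^{5/2} ≥ 1` and `x = ε`, `y = α` in `[0, 1]`, induction gives
`a_{n+1} ≤ (3C + 1)^{n+1} (s^{n+1} x^{1/2^n} + s^n y^{1/2^n})`. The bracket increases with `n`
since `x, y ≤ 1`, so it dominates the forcing term `s x + y`; and `s` times its square root is
at most the next bracket, by subadditivity of `√` and `√(s^k) ≤ s^k`. Hence each of the three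
parts `a_{n+1}`, `s x + y`, `s √a_{n+1}` of the recursion is at most `(3C + 1)^{n+1}` times the
next bracket.
-/

open Real

namespace Real

lemma sqrt_add_le_add_sqrt {x y : ℝ} (hx : 0 ≤ x) (hy : 0 ≤ y) : √(x + y) ≤ √x + √y := by
  rw [sqrt_le_left (by positivity)]
  nlinarith [sq_sqrt hx, sq_sqrt hy, sqrt_nonneg x, sqrt_nonneg y]

lemma sqrt_rpow_one_div_two_pow {x : ℝ} (hx : 0 ≤ x) (n : ℕ) :
    √(x ^ ((1 : ℝ) / 2 ^ n)) = x ^ ((1 : ℝ) / 2 ^ (n + 1)) := by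
  rw [sqrt_eq_rpow, ← rpow_mul hx, pow_succ]
  congr 1
  field_simp

end Real

noncomputable def sqrtRecBound (s x y : ℝ) (n : ℕ) : ℝ :=
  s ^ (n + 1) * x ^ ((1 : ℝ) / 2 ^ n) + s ^ n * y ^ ((1 : ℝ) / 2 ^ n)

namespace sqrtRecBound

variable {s x y : ℝ}

lemma zero_eq : sqrtRecBound s x y 0 = s * x + y := by
  simp [sqrtRecBound]

lemma nonneg (hs : 0 ≤ s) (hx : 0 ≤ x) (hy : 0 ≤ y) (n : ℕ) : 0 ≤ sqrtRecBound s x y n := by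
  unfold sqrtRecBound
  positivity

lemma le_succ (hs : 1 ≤ s) (hx₀ : 0 ≤ x) (hx₁ : x ≤ 1) (hy₀ : 0 ≤ y) (hy₁ : y ≤ 1) (n : ℕ) :
    sqrtRecBound s x y n ≤ sqrtRecBound s x y (n + 1) := by
  have hexp : (1 : ℝ) / 2 ^ (n + 1) ≤ 1 / 2 ^ n :=
    one_div_le_one_div_of_le (by positivity) (pow_le_pow_right₀ (by norm_num) n.le_succ)
  unfold sqrtRecBound
  gcongr ?_ * ?_ + ?_ * ?_
  · exact pow_le_pow_right₀ hs (by omega)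
  · exact rpow_le_rpow_of_exponent_ge' hx₀ hx₁ (by positivity) hexp
  · exact pow_le_pow_right₀ hs (by omega)
  · exact rpow_le_rpow_of_exponent_ge' hy₀ hy₁ (by positivity) hexp

lemma add_le (hs : 1 ≤ s) (hx₀ : 0 ≤ x) (hx₁ : x ≤ 1) (hy₀ : 0 ≤ y) (hy₁ : y ≤ 1) (n : ℕ) :
    s * x + y ≤ sqrtRecBound s x y n :=
  zero_eq (s := s) ▸ monotone_nat_of_le_succ (le_succ hs hx₀ hx₁ hy₀ hy₁) n.zero_le

lemma mul_sqrt_le_succ (hs : 1 ≤ s) (hx₀ : 0 ≤ x) (hy₀ : 0 ≤ y) (n : ℕ) :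
    s * √(sqrtRecBound s x y n) ≤ sqrtRecBound s x y (n + 1) := by
  have hs₀ : 0 ≤ s := zero_le_one.trans hs
  have hsqrt_pow (k : ℕ) : √(s ^ k) ≤ s ^ k := sqrt_le_self_iff.mpr (.inr (one_le_pow₀ hs))
  calc s * √(sqrtRecBound s x y n)
      ≤ s * (√(s ^ (n + 1)) * √(x ^ ((1 : ℝ) / 2 ^ n))
          + √(s ^ n) * √(y ^ ((1 : ℝ) / 2 ^ n))) := by
        unfold sqrtRecBound
        rw [← sqrt_mul (by positivity), ← sqrt_mul (by positivity)]
        gcongr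
        exact sqrt_add_le_add_sqrt (by positivity) (by positivity)
    _ ≤ s * (s ^ (n + 1) * x ^ ((1 : ℝ) / 2 ^ (n + 1))
          + s ^ n * y ^ ((1 : ℝ) / 2 ^ (n + 1))) := by
        rw [sqrt_rpow_one_div_two_pow hx₀, sqrt_rpow_one_div_two_pow hy₀]
        gcongr <;> apply hsqrt_pow
    _ = sqrtRecBound s x y (n + 1) := by
        unfold sqrtRecBound
        ring

end sqrtRecBound

lemma le_pow_mul_sqrtRecBound {C s x y : ℝ} {b : ℕ → ℝ} {N : ℕ} (hC : 0 ≤ C) (hs : 1 ≤ s)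
    (hx₀ : 0 ≤ x) (hx₁ : x ≤ 1) (hy₀ : 0 ≤ y) (hy₁ : y ≤ 1) (h₀ : b 0 ≤ C * (s * x + y))
    (hrec : ∀ n < N, b (n + 1) ≤ C * (b n + s * x + s * √(b n) + y)) :
    ∀ n ≤ N, b n ≤ (3 * C + 1) ^ (n + 1) * sqrtRecBound s x y n := by
  set D := 3 * C + 1
  have hD : 1 ≤ D := by linarith
  have hR (n : ℕ) := sqrtRecBound.nonneg (zero_le_one.trans hs) hx₀ hy₀ n
  intro n
  induction n with
  | zero =>
    intro _
    rw [sqrtRecBound.zero_eq]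
    exact h₀.trans (by gcongr; rw [zero_add, pow_one]; linarith)
  | succ n ih =>
    intro hn
    have hb := ih (by omega)
    set R := sqrtRecBound s x y (n + 1)
    have hDR₀ : 0 ≤ D ^ (n + 1) * R := mul_nonneg (pow_nonneg (zero_le_one.trans hD) _) (hR _)
    have hDR : R ≤ D ^ (n + 1) * R := le_mul_of_one_le_left (hR _) (one_le_pow₀ hD)
    have hb_le : b n ≤ D ^ (n + 1) * R :=
      hb.trans (by gcongr; exact sqrtRecBound.le_succ hs hx₀ hx₁ hy₀ hy₁ n)
    have hforce : s * x + y ≤ D ^ (n + 1) * R :=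
      (sqrtRecBound.add_le hs hx₀ hx₁ hy₀ hy₁ _).trans hDR
    have hsqrt : s * √(b n) ≤ D ^ (n + 1) * R :=
      calc s * √(b n)
          ≤ s * (√(D ^ (n + 1)) * √(sqrtRecBound s x y n)) := by
            rw [← sqrt_mul (by positivity)]
            gcongr
        _ = √(D ^ (n + 1)) * (s * √(sqrtRecBound s x y n)) := by ring
        _ ≤ D ^ (n + 1) * R := by
            gcongr
            · exact sqrt_le_self_iff.mpr (.inr (one_le_pow₀ hD))
            · exact sqrtRecBound.mul_sqrt_le_succ hs hx₀ hy₀ n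
    calc b (n + 1) ≤ C * (b n + s * x + s * √(b n) + y) := hrec n (by omega)
      _ ≤ C * (3 * (D ^ (n + 1) * R)) := by gcongr; linarith
      _ ≤ D * (D ^ (n + 1) * R) := by
          rw [← mul_assoc]
          gcongr
          linarith
      _ = D ^ (n + 1 + 1) * R := by ring

/-- Recursive bound propagation for adapted Wasserstein error. -/
theorem stmt_19 (C : ℝ) (T : ℕ) (hC : 0 < C) (hT : 1 ≤ T) :
    ∃ C' : ℝ, 0 < C' ∧
      ∀ (c 𝒯 ε : ℝ), 0 < c → 1 < 𝒯 → 0 ≤ ε → ε < 1 →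
        𝒯 ^ 2 * Real.exp (-𝒯) + Real.exp (-(c * 𝒯)) < 1 →
        ∀ a : ℕ → ℝ, (∀ t, 0 ≤ a t) →
          a 1 ≤ C * (𝒯 ^ ((5 : ℝ) / 2) * ε
              + (𝒯 ^ 2 * Real.exp (-𝒯) + Real.exp (-(c * 𝒯)))) →
          (∀ t : ℕ, 1 ≤ t → t ≤ T - 1 →
            a (t + 1) ≤ C * (a t + 𝒯 ^ ((5 : ℝ) / 2) * ε
              + 𝒯 ^ ((5 : ℝ) / 2) * (a t) ^ ((1 : ℝ) / 2)
              + (𝒯 ^ 2 * Real.exp (-𝒯) + Real.exp (-(c * 𝒯))))) →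
          a T ≤ C' * (𝒯 ^ ((5 : ℝ) * T / 2) * ε ^ ((1 : ℝ) / 2 ^ (T - 1))
            + 𝒯 ^ ((5 : ℝ) * ((T : ℝ) - 1) / 2)
              * (𝒯 ^ 2 * Real.exp (-𝒯) + Real.exp (-(c * 𝒯)))
                  ^ ((1 : ℝ) / 2 ^ (T - 1))) := by
  obtain ⟨N, rfl⟩ : ∃ N, T = N + 1 := ⟨T - 1, by omega⟩
  refine ⟨(3 * C + 1) ^ (N + 1), by positivity, ?_⟩
  intro c 𝒯 ε _ h𝒯 hε₀ hε₁ hα₁ a _ h₁ hrec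
  set s := 𝒯 ^ ((5 : ℝ) / 2)
  have hpow (k : ℕ) : 𝒯 ^ ((5 : ℝ) * k / 2) = s ^ k := by
    rw [← rpow_natCast, ← rpow_mul (by linarith)]
    ring_nf
  have hbound := le_pow_mul_sqrtRecBound (b := fun n ↦ a (n + 1)) hC.le
    (one_le_rpow h𝒯.le (by norm_num)) hε₀ hε₁.le (by positivity) hα₁.le h₁
    (fun n hn ↦ by simpa [sqrt_eq_rpow] using hrec (n + 1) (by omega) (by omega)) N le_rfl
  have hexp : (5 : ℝ) * (((N + 1 : ℕ) : ℝ) - 1) / 2 = 5 * (N : ℕ) / 2 := by push_cast; ring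
  rw [hexp, hpow, hpow, Nat.add_sub_cancel]
  exact hbound
end
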